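/- The triple u(x,y,t) = −(σ/(2δ))(2ay+b)² + (σ/(2δ))y² + c₁y + c₂, s(x,y,t) = (b₂/a₂)x + x²/2 + ay² + by + c, φ(x,y,t) = (b₂/(δa₂))x + x²/(2δ) + (σ/(2δ))(2ay+b)² + b₂²/(2δa₂²) solves the dDS system, provided the constants satisfy k₀ = b²(σ+6a) − 2c₂δ(1+2σa) − 2σbc₁δ = 0, k₁ = 24a²b − 2c₁δ + 4abσ − 8σac₁δ − 2b = 0, and k₂ = (4a²−1)(6a+σ) = 0. -/

import Mathlib

noncomputable section

/-- Partial derivative in the first (x) argument. -/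
def px (f : ℝ → ℝ → ℝ → ℝ) : ℝ → ℝ → ℝ → ℝ :=
  fun x y t => deriv (fun x' => f x' y t) x

/-- Partial derivative in the second (y) argument. -/
def py (f : ℝ → ℝ → ℝ → ℝ) : ℝ → ℝ → ℝ → ℝ :=
  fun x y t => deriv (fun y' => f x y' t) y

/-- Partial derivative in the third (t) argument. -/
def pt (f : ℝ → ℝ → ℝ → ℝ) : ℝ → ℝ → ℝ → ℝ :=
  fun x y t => deriv (fun t' => f x y t') t

/-- The dispersionless Davey–Stewartson system at a point (x,y,t):
u_t + (u s_x)_x + σ(u s_y)_y = 0,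
s_t + (1/2)(s_x² + σ s_y²) − δφ = 0,
σφ_yy − φ_xx + u_xx + σu_yy = 0. -/
def dDSeq (σ δ : ℝ) (u s φ : ℝ → ℝ → ℝ → ℝ) (x y t : ℝ) : Prop :=
  pt u x y t + px (fun x y t => u x y t * px s x y t) x y t
      + σ * py (fun x y t => u x y t * py s x y t) x y t = 0 ∧
  pt s x y t + (1/2) * ((px s x y t) ^ 2 + σ * (py s x y t) ^ 2) - δ * φ x y t = 0 ∧
  σ * py (py φ) x y t - px (px φ) x y t + px (px u) x y t + σ * py (py u) x y t = 0

/-! Since `u` depends only on `y` while `s` and `φ` split as a function of `x` plus a function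
of `y`, the three equations reduce to identities between polynomials of degree at most two in
`x` and `y`. The first one, multiplied by `2δ`, is `-(k₀ + k₁ y + k₂ y²)` up to a multiple of
`σ² - 1`; the second is an expansion of a square; the third again holds because `σ² = 1`. -/

section Quadratic

variable {𝕜 : Type*} [NontriviallyNormedField 𝕜]

theorem hasDerivAt_quadratic (p₀ p₁ p₂ v : 𝕜) :
    HasDerivAt (fun v => p₀ + p₁ * v + p₂ * v ^ 2) (p₁ + 2 * p₂ * v) v := by
  refine ((((hasDerivAt_id' v).const_mul p₁).const_add p₀).fun_add
    ((hasDerivAt_pow 2 v).const_mul p₂)).congr_deriv ?_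
  push_cast
  ring

theorem deriv_quadratic (p₀ p₁ p₂ : 𝕜) :
    deriv (fun v => p₀ + p₁ * v + p₂ * v ^ 2) = fun v => p₁ + 2 * p₂ * v :=
  funext fun v => (hasDerivAt_quadratic p₀ p₁ p₂ v).deriv

theorem deriv_affine (p₀ p₁ : 𝕜) : deriv (fun v => p₀ + p₁ * v) = fun _ => p₁ :=
  funext fun v => (((hasDerivAt_id' v).const_mul p₁).const_add p₀).deriv.trans (mul_one p₁)

end Quadratic

theorem dDSeq_of_separable {σ δ : ℝ} {u s φ : ℝ → ℝ → ℝ → ℝ} {U S₁ S₂ Φ₁ Φ₂ : ℝ → ℝ}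
    (hu : ∀ x y t, u x y t = U y) (hs : ∀ x y t, s x y t = S₁ x + S₂ y)
    (hφ : ∀ x y t, φ x y t = Φ₁ x + Φ₂ y) {x y t : ℝ}
    (hU : DifferentiableAt ℝ U y) (hS₂ : DifferentiableAt ℝ (deriv S₂) y)
    (h₁ : U y * deriv (deriv S₁) x
      + σ * (deriv U y * deriv S₂ y + U y * deriv (deriv S₂) y) = 0)
    (h₂ : (1 / 2) * (deriv S₁ x ^ 2 + σ * deriv S₂ y ^ 2) - δ * (Φ₁ x + Φ₂ y) = 0)
    (h₃ : σ * deriv (deriv Φ₂) y - deriv (deriv Φ₁) x + σ * deriv (deriv U) y = 0) :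
    dDSeq σ δ u s φ x y t := by
  obtain rfl : u = fun _ y _ => U y := funext₃ hu
  obtain rfl : s = fun x y _ => S₁ x + S₂ y := funext₃ hs
  obtain rfl : φ = fun x y _ => Φ₁ x + Φ₂ y := funext₃ hφ
  simp only [dDSeq, px, py, pt, deriv_add_const, deriv_const_add, deriv_const,
    deriv_const_mul_field']
  rw [deriv_fun_mul hU hS₂]
  exact ⟨by linear_combination h₁, by linear_combination h₂, by linear_combination h₃⟩

theorem stmt_19_general (σ δ a₂ a b c b₂ c₁ c₂ : ℝ)
    (hσ : σ = 1 ∨ σ = -1) (hδ : δ ≠ 0)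
    (hk₀ : b ^ 2 * (σ + 6 * a) - 2 * c₂ * δ * (1 + 2 * σ * a) - 2 * σ * b * c₁ * δ = 0)
    (hk₁ : 24 * a ^ 2 * b - 2 * c₁ * δ + 4 * a * b * σ - 8 * σ * a * c₁ * δ - 2 * b = 0)
    (hk₂ : (4 * a ^ 2 - 1) * (6 * a + σ) = 0)
    (u s φ : ℝ → ℝ → ℝ → ℝ)
    (hu : ∀ x y t, u x y t
      = -(σ / (2 * δ)) * (2 * a * y + b) ^ 2 + (σ / (2 * δ)) * y ^ 2 + c₁ * y + c₂)
    (hs : ∀ x y t, s x y t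
      = (b₂ / a₂) * x + x ^ 2 / 2 + a * y ^ 2 + b * y + c)
    (hφ : ∀ x y t, φ x y t
      = (b₂ / (δ * a₂)) * x + x ^ 2 / (2 * δ) + (σ / (2 * δ)) * (2 * a * y + b) ^ 2
        + b₂ ^ 2 / (2 * δ * a₂ ^ 2)) :
    ∀ x y t : ℝ, dDSeq σ δ u s φ x y t := by
  have hσ2 : σ ^ 2 = 1 := by rcases hσ with rfl | rfl <;> norm_num
  intro x y t
  refine dDSeq_of_separable
    (U := fun v => (c₂ - σ * b ^ 2 / (2 * δ)) + (c₁ - 2 * σ * a * b / δ) * v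
      + σ * (1 - 4 * a ^ 2) / (2 * δ) * v ^ 2)
    (S₁ := fun v => c + b₂ / a₂ * v + 1 / 2 * v ^ 2) (S₂ := fun v => 0 + b * v + a * v ^ 2)
    (Φ₁ := fun v => b₂ ^ 2 / (2 * δ * a₂ ^ 2) + b₂ / (δ * a₂) * v + 1 / (2 * δ) * v ^ 2)
    (Φ₂ := fun v => σ * b ^ 2 / (2 * δ) + 2 * σ * a * b / δ * v + 2 * σ * a ^ 2 / δ * v ^ 2)
    (fun x y t => by rw [hu]; ring) (fun x y t => by rw [hs]; ring)
    (fun x y t => by rw [hφ]; ring)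
    (hasDerivAt_quadratic _ _ _ y).differentiableAt (by rw [deriv_quadratic]; fun_prop)
    ?_ ?_ ?_ <;>
  simp only [deriv_quadratic, deriv_affine]
  · field_simp
    linear_combination -(hk₀ + y * hk₁ + y ^ 2 * hk₂)
      + (6 * a * (1 - 4 * a ^ 2) * y ^ 2 + (2 * b - 24 * a ^ 2 * b) * y - 6 * a * b ^ 2) * hσ2
  · linear_combination -(b₂ ^ 2 / (2 * a₂ ^ 2) + b₂ / a₂ * x + x ^ 2 / 2
      + σ / 2 * (b + 2 * a * y) ^ 2) * mul_inv_cancel₀ hδ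
  · field_simp
    linear_combination hσ2

/-- The explicit triple u = −(σ/(2δ))(2ay+b)² + (σ/(2δ))y² + c₁y + c₂,
s = (b₂/a₂)x + x²/2 + ay² + by + c,
φ = (b₂/(δa₂))x + x²/(2δ) + (σ/(2δ))(2ay+b)² + b₂²/(2δa₂²)
solves the dDS system provided k₀ = k₁ = k₂ = 0. -/
theorem stmt_19 (σ δ a₂ a b c b₂ c₁ c₂ : ℝ)
    (hσ : σ = 1 ∨ σ = -1) (hδ : δ ≠ 0) (ha₂ : a₂ ≠ 0)
    (hk₀ : b ^ 2 * (σ + 6 * a) - 2 * c₂ * δ * (1 + 2 * σ * a) - 2 * σ * b * c₁ * δ = 0)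
    (hk₁ : 24 * a ^ 2 * b - 2 * c₁ * δ + 4 * a * b * σ - 8 * σ * a * c₁ * δ - 2 * b = 0)
    (hk₂ : (4 * a ^ 2 - 1) * (6 * a + σ) = 0)
    (u s φ : ℝ → ℝ → ℝ → ℝ)
    (hu : ∀ x y t, u x y t
      = -(σ / (2 * δ)) * (2 * a * y + b) ^ 2 + (σ / (2 * δ)) * y ^ 2 + c₁ * y + c₂)
    (hs : ∀ x y t, s x y t
      = (b₂ / a₂) * x + x ^ 2 / 2 + a * y ^ 2 + b * y + c)
    (hφ : ∀ x y t, φ x y t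
      = (b₂ / (δ * a₂)) * x + x ^ 2 / (2 * δ) + (σ / (2 * δ)) * (2 * a * y + b) ^ 2
        + b₂ ^ 2 / (2 * δ * a₂ ^ 2)) :
    ∀ x y t : ℝ, dDSeq σ δ u s φ x y t :=
  stmt_19_general σ δ a₂ a b c b₂ c₁ c₂ hσ hδ hk₀ hk₁ hk₂ u s φ hu hs hφ
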